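/- For every m > β + 4, sup_{x ∈ ℝ^d} (1+|x|^m)^{−1} |u(x) − ∫_0^N (∫ f(y) μ_t^x(dy)) dt| → 0 as N → ∞; that is, the truncated integrals converge to u uniformly in the weighted supremum norm with weight (1+|x|^m)^{−1}. -/

import Mathlib

/-!
Cut `f` at a radius `R ≥ 1`. On the ball `|f| ≤ C_f (1 + R^β)`, so the integrals of the cut-off
function against `μ_t^x` and `μ` differ by at most `C_f (1 + R^β) ‖μ_t^x − μ‖`; off the ball
`|f(y)| ≤ 2 C_f |y|^{β+2} / R²`, which the `(β+2)`-th moments control. If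
`‖μ_t^x − μ‖ ≲ (1 + |x|^m)(1 + t)^{-q}`, the radius `R = (1+t)^{q/(β+2)}` makes both errors
`≲ (1 + |x|^m)(1 + t)^{-p}` with `p = 2q/(β+2)`, and `m > β + 4` leaves room for `p > 1`.
The tail `∫_N^∞` of `t ↦ ∫ f dμ_t^x`, divided by `1 + |x|^m`, is then at most the tail of one
integrable function of `t`, uniformly in `x`.
-/

open MeasureTheory Set

/-- Total variation norm of the difference of two (finite) measures. -/
noncomputable def tvNorm {α : Type*} [MeasurableSpace α] (μ ν : Measure α) : ℝ :=
  (⨆ (E : Set α) (_ : MeasurableSet E), (μ E - ν E)).toReal +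
  (⨆ (E : Set α) (_ : MeasurableSet E), (ν E - μ E)).toReal

open ENNReal Filter Topology

section TotalVariation

variable {α : Type*} [MeasurableSpace α] (ν μ : Measure α) [IsFiniteMeasure ν]
  [IsFiniteMeasure μ]

theorem integral_le_integral_add_mul_iSup_sub {g : α → ℝ} (hg : Measurable g) {M : ℝ}
    (hM : 0 ≤ M) (hg0 : ∀ y, 0 ≤ g y) (hgM : ∀ y, g y ≤ M) :
    ∫ y, g y ∂ν ≤
      ∫ y, g y ∂μ + M * (⨆ (E : Set α) (_ : MeasurableSet E), ν E - μ E).toReal := by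
  set S := ⨆ (E : Set α) (_ : MeasurableSet E), ν E - μ E
  have hS : S ≠ ∞ := ne_top_of_le_ne_top (measure_ne_top ν univ)
    (iSup₂_le fun E _ => tsub_le_self.trans (measure_mono (subset_univ E)))
  -- layer cake: below level `M` the superlevel sets of `g` differ in mass by at most `S`
  have hlevel t : ν {a | t < g a} ≤ (Iio M).indicator (fun _ => S) t + μ {a | t < g a} := by
    by_cases ht : t < M
    · rw [indicator_of_mem (show t ∈ Iio M from ht), ← tsub_le_iff_right]
      exact le_iSup₂ (f := fun (E : Set α) (_ : MeasurableSet E) => ν E - μ E) _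
        (measurableSet_lt measurable_const hg)
    · have hempty : {a | t < g a} = ∅ :=
        eq_empty_of_forall_notMem fun a ha => ht ((ha : t < g a).trans_le (hgM a))
      simp [hempty]
  have hlin : ∫⁻ y, ENNReal.ofReal (g y) ∂ν ≤
      S * ENNReal.ofReal M + ∫⁻ y, ENNReal.ofReal (g y) ∂μ :=
    calc ∫⁻ y, ENNReal.ofReal (g y) ∂ν = ∫⁻ t in Ioi 0, ν {a | t < g a} :=
          lintegral_eq_lintegral_meas_lt ν (ae_of_all _ hg0) hg.aemeasurable
      _ ≤ ∫⁻ t in Ioi 0, ((Iio M).indicator (fun _ => S) t + μ {a | t < g a}) :=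
          lintegral_mono hlevel
      _ = S * ENNReal.ofReal M + ∫⁻ y, ENNReal.ofReal (g y) ∂μ := by
          rw [lintegral_add_left (measurable_const.indicator measurableSet_Iio),
            lintegral_indicator_const measurableSet_Iio, Measure.restrict_apply measurableSet_Iio,
            Iio_inter_Ioi, Real.volume_Ioo, sub_zero,
            lintegral_eq_lintegral_meas_lt μ (ae_of_all _ hg0) hg.aemeasurable]
  have hint : Integrable g μ := .of_bound hg.aestronglyMeasurable M
    (ae_of_all _ fun y => by rw [Real.norm_of_nonneg (hg0 y)]; exact hgM y)
  have hfin := (lintegral_ofReal_ne_top_iff_integrable hg.aestronglyMeasurable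
    (ae_of_all _ hg0)).2 hint
  rw [integral_eq_lintegral_of_nonneg_ae (ae_of_all _ hg0) hg.aestronglyMeasurable,
    integral_eq_lintegral_of_nonneg_ae (ae_of_all _ hg0) hg.aestronglyMeasurable]
  calc (∫⁻ y, ENNReal.ofReal (g y) ∂ν).toReal
      ≤ (S * ENNReal.ofReal M + ∫⁻ y, ENNReal.ofReal (g y) ∂μ).toReal :=
        toReal_mono (add_ne_top.2 ⟨mul_ne_top hS ofReal_ne_top, hfin⟩) hlin
    _ = _ := by
        rw [toReal_add (mul_ne_top hS ofReal_ne_top) hfin, toReal_mul, toReal_ofReal hM]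
        ring

theorem abs_integral_sub_integral_le_mul_tvNorm {g : α → ℝ} (hg : Measurable g) {M : ℝ}
    (hM : 0 ≤ M) (hgM : ∀ y, |g y| ≤ M) :
    |∫ y, g y ∂ν - ∫ y, g y ∂μ| ≤ M * tvNorm ν μ := by
  have hpos_le y : max (g y) 0 ≤ M := max_le ((le_abs_self _).trans (hgM y)) hM
  have hneg_le y : max (-g y) 0 ≤ M := max_le ((neg_le_abs _).trans (hgM y)) hM
  have hpos : Measurable fun y => max (g y) 0 := hg.max measurable_const
  have hneg : Measurable fun y => max (-g y) 0 := hg.neg.max measurable_const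
  have hsplit (κ : Measure α) [IsFiniteMeasure κ] :
      ∫ y, g y ∂κ = ∫ y, max (g y) 0 ∂κ - ∫ y, max (-g y) 0 ∂κ := by
    rw [← integral_sub
      (.of_bound hpos.aestronglyMeasurable M (ae_of_all _ fun y => by
        rw [Real.norm_of_nonneg (le_max_right _ _)]; exact hpos_le y))
      (.of_bound hneg.aestronglyMeasurable M (ae_of_all _ fun y => by
        rw [Real.norm_of_nonneg (le_max_right _ _)]; exact hneg_le y))]
    simp only [max_zero_sub_max_neg_zero_eq_self]
  have h₁ := integral_le_integral_add_mul_iSup_sub ν μ hpos hM (fun _ => le_max_right _ _) hpos_le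
  have h₂ := integral_le_integral_add_mul_iSup_sub μ ν hpos hM (fun _ => le_max_right _ _) hpos_le
  have h₃ := integral_le_integral_add_mul_iSup_sub ν μ hneg hM (fun _ => le_max_right _ _) hneg_le
  have h₄ := integral_le_integral_add_mul_iSup_sub μ ν hneg hM (fun _ => le_max_right _ _) hneg_le
  rw [hsplit ν, hsplit μ, tvNorm, abs_le]
  constructor <;> linarith

end TotalVariation

theorem integrable_and_integral_le_of_lintegral_ofReal_le {α : Type*} [MeasurableSpace α]
    {ν : Measure α} {g : α → ℝ} (hg : AEStronglyMeasurable g ν) (hg0 : 0 ≤ᵐ[ν] g) {K : ℝ}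
    (hK : 0 ≤ K) (h : ∫⁻ y, ENNReal.ofReal (g y) ∂ν ≤ ENNReal.ofReal K) :
    Integrable g ν ∧ ∫ y, g y ∂ν ≤ K :=
  ⟨(lintegral_ofReal_ne_top_iff_integrable hg hg0).1 (ne_top_of_le_ne_top ofReal_ne_top h), by
    rw [integral_eq_lintegral_of_nonneg_ae hg0 hg]; exact toReal_le_of_le_ofReal hK h⟩

theorem one_add_rpow_mul_sq_le {r R β : ℝ} (hβ : 0 ≤ β) (hR : 1 ≤ R) (hRr : R < r) :
    (1 + r ^ β) * R ^ 2 ≤ 2 * r ^ (β + 2) := by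
  have hrβ : 1 ≤ r ^ β := Real.one_le_rpow (hR.trans hRr.le) hβ
  have hsq : R ^ 2 ≤ r ^ 2 := pow_le_pow_left₀ (by linarith) hRr.le 2
  rw [Real.rpow_add (by linarith), Real.rpow_two]
  nlinarith

section Truncation

variable {E : Type*} [NormedAddCommGroup E] [MeasurableSpace E] [OpensMeasurableSpace E]
  (ν μ : Measure E) [IsFiniteMeasure ν] [IsFiniteMeasure μ] {f : E → ℝ} {β Cf : ℝ}

theorem abs_integral_mul_sq_le_of_tvNorm (hf : Measurable f) (hβ : 0 ≤ β)
    (hfb : ∀ y, |f y| ≤ Cf * (1 + ‖y‖ ^ β)) (hfμ : ∫ y, f y ∂μ = 0) {R T : ℝ} (hR : 1 ≤ R)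
    (htv : tvNorm ν μ * R ^ (β + 2) ≤ T) (hν : Integrable (fun y => ‖y‖ ^ (β + 2)) ν)
    (hμ : Integrable (fun y => ‖y‖ ^ (β + 2)) μ) :
    |∫ y, f y ∂ν| * R ^ 2 ≤
      2 * Cf * (T + ∫ y, ‖y‖ ^ (β + 2) ∂ν + ∫ y, ‖y‖ ^ (β + 2) ∂μ) := by
  have hCf : 0 ≤ Cf := nonneg_of_mul_nonneg_left ((abs_nonneg _).trans (hfb 0)) (by positivity)
  have hRβ : 1 ≤ R ^ β := Real.one_le_rpow hR hβ
  set s := {y : E | ‖y‖ ≤ R}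
  have hs : MeasurableSet s := measurableSet_le measurable_norm measurable_const
  have hin y : |s.indicator f y| ≤ Cf * (1 + R ^ β) := by
    by_cases hy : y ∈ s
    · rw [indicator_of_mem hy]
      exact (hfb y).trans (by gcongr; exact hy)
    · rw [indicator_of_notMem hy, abs_zero]; positivity
  have hout y : ‖sᶜ.indicator f y‖ ≤ 2 * Cf / R ^ 2 * ‖y‖ ^ (β + 2) := by
    by_cases hy : y ∈ sᶜ
    · rw [indicator_of_mem hy, Real.norm_eq_abs, div_mul_eq_mul_div, le_div_iff₀ (by positivity)]
      calc |f y| * R ^ 2 ≤ Cf * ((1 + ‖y‖ ^ β) * R ^ 2) := by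
            rw [← mul_assoc]; gcongr; exact hfb y
        _ ≤ Cf * (2 * ‖y‖ ^ (β + 2)) :=
            mul_le_mul_of_nonneg_left (one_add_rpow_mul_sq_le hβ hR (not_le.1 hy)) hCf
        _ = 2 * Cf * ‖y‖ ^ (β + 2) := by ring
    · rw [indicator_of_notMem hy, norm_zero]; positivity
  have htail (κ : Measure E) (hκ : Integrable (fun y => ‖y‖ ^ (β + 2)) κ) :
      Integrable (sᶜ.indicator f) κ ∧
        |∫ y, sᶜ.indicator f y ∂κ| ≤ 2 * Cf / R ^ 2 * ∫ y, ‖y‖ ^ (β + 2) ∂κ := by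
    refine ⟨(hκ.const_mul _).mono' (hf.indicator hs.compl).aestronglyMeasurable
      (ae_of_all _ hout), ?_⟩
    rw [← integral_const_mul]
    exact norm_integral_le_of_norm_le (hκ.const_mul _) (ae_of_all _ hout)
  have hsplit (κ : Measure E) [IsFiniteMeasure κ]
      (hκ : Integrable (fun y => ‖y‖ ^ (β + 2)) κ) :
      ∫ y, f y ∂κ = ∫ y, s.indicator f y ∂κ + ∫ y, sᶜ.indicator f y ∂κ := by
    rw [← integral_add (.of_bound (hf.indicator hs).aestronglyMeasurable _ (ae_of_all _ hin))
      (htail κ hκ).1]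
    simp only [indicator_self_add_compl_apply]
  have hbulk := abs_integral_sub_integral_le_mul_tvNorm ν μ (hf.indicator hs) (by positivity) hin
  have hsum : |∫ y, f y ∂ν| ≤ Cf * (1 + R ^ β) * tvNorm ν μ +
      2 * Cf / R ^ 2 * (∫ y, ‖y‖ ^ (β + 2) ∂ν + ∫ y, ‖y‖ ^ (β + 2) ∂μ) := by
    have hνtail := (htail ν hν).2
    have hμtail := (htail μ hμ).2
    rw [hsplit μ hμ] at hfμ
    rw [hsplit ν hν, mul_add]
    rw [abs_le] at hbulk hνtail hμtail ⊢
    constructor <;> linarith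
  have hR2 : Cf * (1 + R ^ β) * R ^ 2 ≤ 2 * Cf * R ^ (β + 2) := by
    rw [Real.rpow_add (by linarith), Real.rpow_two]
    nlinarith [mul_nonneg (mul_nonneg hCf (sq_nonneg R)) (sub_nonneg.2 hRβ)]
  have htv0 : 0 ≤ tvNorm ν μ := add_nonneg toReal_nonneg toReal_nonneg
  calc |∫ y, f y ∂ν| * R ^ 2
      ≤ (Cf * (1 + R ^ β) * tvNorm ν μ +
          2 * Cf / R ^ 2 * (∫ y, ‖y‖ ^ (β + 2) ∂ν + ∫ y, ‖y‖ ^ (β + 2) ∂μ)) * R ^ 2 := by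
        gcongr
    _ = Cf * (1 + R ^ β) * R ^ 2 * tvNorm ν μ +
          2 * Cf * (∫ y, ‖y‖ ^ (β + 2) ∂ν + ∫ y, ‖y‖ ^ (β + 2) ∂μ) := by
        field_simp
    _ ≤ 2 * Cf * R ^ (β + 2) * tvNorm ν μ +
          2 * Cf * (∫ y, ‖y‖ ^ (β + 2) ∂ν + ∫ y, ‖y‖ ^ (β + 2) ∂μ) := by
        gcongr
    _ = 2 * Cf * (tvNorm ν μ * R ^ (β + 2) +
          (∫ y, ‖y‖ ^ (β + 2) ∂ν + ∫ y, ‖y‖ ^ (β + 2) ∂μ)) := by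
        ring
    _ ≤ 2 * Cf * (T + (∫ y, ‖y‖ ^ (β + 2) ∂ν + ∫ y, ‖y‖ ^ (β + 2) ∂μ)) := by
        gcongr
    _ = _ := by ring

theorem abs_integral_le_mul_one_add_rpow_neg (hf : Measurable f) (hβ : 0 ≤ β)
    (hfb : ∀ y, |f y| ≤ Cf * (1 + ‖y‖ ^ β)) (hfμ : ∫ y, f y ∂μ = 0) {t q T : ℝ} (ht : 0 ≤ t)
    (hq : 0 ≤ q) (htv : tvNorm ν μ ≤ T * (1 + t) ^ (-q))
    (hν : Integrable (fun y => ‖y‖ ^ (β + 2)) ν) (hμ : Integrable (fun y => ‖y‖ ^ (β + 2)) μ) :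
    |∫ y, f y ∂ν| ≤ 2 * Cf * (T + ∫ y, ‖y‖ ^ (β + 2) ∂ν + ∫ y, ‖y‖ ^ (β + 2) ∂μ) *
      (1 + t) ^ (-(2 * q / (β + 2))) := by
  have h1t : 0 < 1 + t := by linarith
  set R := (1 + t) ^ (q / (β + 2))
  have hR : 1 ≤ R := Real.one_le_rpow (by linarith) (by positivity)
  have hRβ : R ^ (β + 2) = (1 + t) ^ q := by
    rw [← Real.rpow_mul h1t.le, div_mul_cancel₀ _ (by linarith)]
  have hR2 : (1 + t) ^ (-(2 * q / (β + 2))) = (R ^ 2)⁻¹ := by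
    rw [Real.rpow_neg h1t.le, ← Real.rpow_natCast, ← Real.rpow_mul h1t.le]
    push_cast; ring_nf
  have htvR : tvNorm ν μ * R ^ (β + 2) ≤ T := by
    rw [hRβ]
    calc _ ≤ T * (1 + t) ^ (-q) * (1 + t) ^ q := by gcongr
      _ = T := by rw [mul_assoc, ← Real.rpow_add h1t, neg_add_cancel, Real.rpow_zero, mul_one]
  rw [hR2, ← div_eq_mul_inv, le_div_iff₀ (by positivity)]
  exact abs_integral_mul_sq_le_of_tvNorm ν μ hf hβ hfb hfμ hR htvR hν hμ

theorem exists_forall_abs_integral_le_mul_rpow_neg {X : Type*} {P : ℝ → X → Measure E}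
    (hP : ∀ t x, 0 ≤ t → IsFiniteMeasure (P t x)) {W : X → ℝ} (hW : ∀ x, 1 ≤ W x)
    (hf : Measurable f) (hβ : 0 ≤ β) (hfb : ∀ y, |f y| ≤ Cf * (1 + ‖y‖ ^ β))
    (hfμ : ∫ y, f y ∂μ = 0) {q C Cm : ℝ} (hq : 0 ≤ q)
    (htv : ∀ t x, 0 ≤ t → tvNorm (P t x) μ ≤ C * W x * (1 + t) ^ (-q))
    (hmom : ∀ t x, 0 ≤ t →
      ∫⁻ y, ENNReal.ofReal (‖y‖ ^ (β + 2)) ∂(P t x) ≤ ENNReal.ofReal (Cm * W x))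
    (hmomμ : ∫⁻ y, ENNReal.ofReal (‖y‖ ^ (β + 2)) ∂μ ≠ ∞) :
    ∃ D, ∀ t x, 0 ≤ t →
      |∫ y, f y ∂(P t x)| ≤ W x * (D * (1 + t) ^ (-(2 * q / (β + 2)))) := by
  have hCf : 0 ≤ Cf := nonneg_of_mul_nonneg_left ((abs_nonneg _).trans (hfb 0)) (by positivity)
  have hmeas : Measurable fun y : E => ‖y‖ ^ (β + 2) := by fun_prop
  have hnonneg (κ : Measure E) : 0 ≤ᵐ[κ] fun y => ‖y‖ ^ (β + 2) :=
    ae_of_all _ fun y => by positivity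
  have hμ := (lintegral_ofReal_ne_top_iff_integrable hmeas.aestronglyMeasurable
    (hnonneg μ)).1 hmomμ
  have hB : 0 ≤ ∫ y, ‖y‖ ^ (β + 2) ∂μ := integral_nonneg_of_ae (hnonneg μ)
  refine ⟨2 * Cf * (C + max Cm 0 + ∫ y, ‖y‖ ^ (β + 2) ∂μ), fun t x ht => ?_⟩
  have := hP t x ht
  have hW0 : 0 ≤ W x := zero_le_one.trans (hW x)
  -- `max Cm 0` because `ENNReal.ofReal` truncates a negative bound to `0`
  obtain ⟨hν, hνW⟩ := integrable_and_integral_le_of_lintegral_ofReal_le (K := max Cm 0 * W x)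
    hmeas.aestronglyMeasurable (hnonneg _) (by positivity)
    ((hmom t x ht).trans (ENNReal.ofReal_le_ofReal (by gcongr; exact le_max_left _ _)))
  have hBW := le_mul_of_one_le_right hB (hW x)
  calc |∫ y, f y ∂(P t x)|
      ≤ 2 * Cf * (C * W x + ∫ y, ‖y‖ ^ (β + 2) ∂(P t x) + ∫ y, ‖y‖ ^ (β + 2) ∂μ) *
          (1 + t) ^ (-(2 * q / (β + 2))) :=
        abs_integral_le_mul_one_add_rpow_neg (P t x) μ hf hβ hfb hfμ ht hq (htv t x ht) hν hμ
    _ ≤ 2 * Cf * (C * W x + max Cm 0 * W x + (∫ y, ‖y‖ ^ (β + 2) ∂μ) * W x) *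
          (1 + t) ^ (-(2 * q / (β + 2))) := by
        gcongr
    _ = _ := by ring

end Truncation

theorem integrableOn_one_add_rpow_neg_Ioi {p : ℝ} (hp : 1 < p) :
    IntegrableOn (fun t : ℝ => (1 + t) ^ (-p)) (Ioi (0 : ℝ)) :=
  (integrable_one_add_norm (by simpa using hp)).integrableOn.congr_fun
    (fun t ht => by simp [Real.norm_of_nonneg (le_of_lt ht)]) measurableSet_Ioi

theorem exists_forall_inv_mul_abs_setIntegral_Ioi_sub_le {ι : Type*} {F : ι → ℝ → ℝ}
    {w : ι → ℝ} {h : ℝ → ℝ} (hh : IntegrableOn h (Ioi (0 : ℝ)))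
    (hF : ∀ i, AEStronglyMeasurable (F i) (volume.restrict (Ioi (0 : ℝ))))
    (hw : ∀ i, 0 < w i) (hFh : ∀ i, ∀ t > 0, |F i t| ≤ w i * h t) {ε : ℝ} (hε : 0 < ε) :
    ∃ N₀, ∀ N ≥ N₀, ∀ i,
      (w i)⁻¹ * |(∫ t in Ioi (0 : ℝ), F i t) - ∫ t in Ioc (0 : ℝ) N, F i t| ≤ ε := by
  have htail : Tendsto (fun N => ∫ t in Ioi N, h t) atTop (𝓝 0) := by
    have hempty : ⋂ N : ℝ, Ioi N = ∅ :=
      eq_empty_of_forall_notMem fun t ht => lt_irrefl t (mem_iInter.1 ht t)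
    simpa [hempty] using tendsto_setIntegral_of_antitone (μ := volume) (f := h)
      (fun _ => measurableSet_Ioi) (fun _ _ hab => Ioi_subset_Ioi hab) ⟨0, hh⟩
  obtain ⟨N₀, hN₀⟩ := eventually_atTop.1
    ((htail.eventually (ge_mem_nhds hε)).and (eventually_ge_atTop 0))
  refine ⟨N₀, fun N hN i => ?_⟩
  obtain ⟨hNε, hN0⟩ := hN₀ N hN
  have hFi : IntegrableOn (F i) (Ioi (0 : ℝ)) :=
    (hh.const_mul (w i)).mono' (hF i) (ae_restrict_of_forall_mem measurableSet_Ioi (hFh i))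
  have hsplit :
      ∫ t in Ioi (0 : ℝ), F i t = (∫ t in Ioc (0 : ℝ) N, F i t) + ∫ t in Ioi N, F i t := by
    rw [← setIntegral_union (Ioc_disjoint_Ioi le_rfl) measurableSet_Ioi
      (hFi.mono_set Ioc_subset_Ioi_self) (hFi.mono_set (Ioi_subset_Ioi hN0)),
      Ioc_union_Ioi_eq_Ioi hN0]
  rw [hsplit, add_sub_cancel_left, inv_mul_le_iff₀ (hw i)]
  calc |∫ t in Ioi N, F i t| ≤ ∫ t in Ioi N, w i * h t := by
        rw [← Real.norm_eq_abs]
        exact norm_integral_le_of_norm_le ((hh.mono_set (Ioi_subset_Ioi hN0)).const_mul _)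
          (ae_restrict_of_forall_mem measurableSet_Ioi fun t ht => hFh i t (hN0.trans_lt ht))
    _ = w i * ∫ t in Ioi N, h t := integral_const_mul _ _
    _ ≤ w i * ε := mul_le_mul_of_nonneg_left hNε (hw i).le

theorem stmt2_general
    (d : ℕ)
    (P : ℝ → EuclideanSpace ℝ (Fin d) → Measure (EuclideanSpace ℝ (Fin d)))
    (μ : Measure (EuclideanSpace ℝ (Fin d)))
    (hP : ∀ t x, 0 ≤ t → IsProbabilityMeasure (P t x))
    (hμ : IsProbabilityMeasure μ)
    (hmeas : ∀ E : Set (EuclideanSpace ℝ (Fin d)), MeasurableSet E →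
      Measurable (fun p : ℝ × EuclideanSpace ℝ (Fin d) => P p.1 p.2 E))
    (hP1 : ∀ m m' : ℝ, 0 < m → m + 2 < m' → ∃ C : ℝ, ∀ t x, 0 ≤ t →
      ∫⁻ y, ENNReal.ofReal (‖y‖ ^ m) ∂(P t x) ≤ ENNReal.ofReal (C * (1 + ‖x‖ ^ m')))
    (hP2 : ∀ m : ℝ, 0 < m → ∫⁻ y, ENNReal.ofReal (‖y‖ ^ m) ∂μ < ⊤)
    (hP3 : ∀ k m : ℝ, 0 < k → 2 * k + 2 < m → ∃ C : ℝ, ∀ t x, 0 ≤ t →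
      tvNorm (P t x) μ ≤ C * (1 + ‖x‖ ^ m) * (1 + t) ^ (-(k + 1)))
    (β Cf : ℝ) (hβ : 0 ≤ β)
    (f : EuclideanSpace ℝ (Fin d) → ℝ) (hf : Measurable f)
    (hfb : ∀ y, |f y| ≤ Cf * (1 + ‖y‖ ^ β))
    (hfμ : ∫ y, f y ∂μ = 0) :
    ∀ m : ℝ, β + 4 < m →
      ∀ ε : ℝ, 0 < ε → ∃ N₀ : ℝ, ∀ N : ℝ, N₀ ≤ N →
        ∀ x,
          (1 + ‖x‖ ^ m)⁻¹ *
            |(∫ t in Ioi (0 : ℝ), ∫ y, f y ∂(P t x)) -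
              ∫ t in Ioc (0 : ℝ) N, ∫ y, f y ∂(P t x)| ≤ ε := by
  intro m hm ε hε
  -- `2q < m` makes `hP3` applicable and `p = 2q / (β + 2) > 1` makes the decay integrable
  set q := (m + β + 4) / 4 with hq
  have hp : 1 < 2 * q / (β + 2) := by rw [lt_div_iff₀ (by linarith)]; linarith
  obtain ⟨C, hC⟩ := hP3 (q - 1) m (by linarith) (by linarith)
  obtain ⟨Cm, hCm⟩ := hP1 (β + 2) m (by linarith) (by linarith)
  obtain ⟨D, hD⟩ := exists_forall_abs_integral_le_mul_rpow_neg μ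
    (fun t x ht => have := hP t x ht; inferInstance)
    (fun x => le_add_of_nonneg_right (by positivity)) hf hβ hfb hfμ (q := q) (by linarith)
    (fun t x ht => by simpa using hC t x ht) hCm (hP2 _ (by linarith)).ne
  have hmeasP x : Measurable fun t => P t x :=
    Measure.measurable_of_measurable_coe _ fun E hE =>
      (hmeas E hE).comp (measurable_id.prodMk measurable_const)
  exact exists_forall_inv_mul_abs_setIntegral_Ioi_sub_le
    ((integrableOn_one_add_rpow_neg_Ioi hp).const_mul D)
    (fun x => (hf.stronglyMeasurable.integral_kernel (κ := ⟨_, hmeasP x⟩)).aestronglyMeasurable)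
    (fun x => by positivity) (fun x t ht => hD t x ht.le) hε

/-- for every `m > β + 4`,
`sup_x (1+|x|^m)⁻¹ |u(x) − ∫_0^N (∫ f dμ_t^x) dt| → 0` as `N → ∞`, i.e. the truncated
integrals converge to `u` uniformly in the weighted sup norm with weight `(1+|x|^m)⁻¹`. -/
theorem stmt2
    (d : ℕ) (hd : 1 ≤ d)
    (P : ℝ → EuclideanSpace ℝ (Fin d) → Measure (EuclideanSpace ℝ (Fin d)))
    (μ : Measure (EuclideanSpace ℝ (Fin d)))
    (hP : ∀ t x, 0 ≤ t → IsProbabilityMeasure (P t x))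
    (hμ : IsProbabilityMeasure μ)
    (hmeas : ∀ E : Set (EuclideanSpace ℝ (Fin d)), MeasurableSet E →
      Measurable (fun p : ℝ × EuclideanSpace ℝ (Fin d) => P p.1 p.2 E))
    (hP1 : ∀ m m' : ℝ, 0 < m → m + 2 < m' → ∃ C : ℝ, ∀ t x, 0 ≤ t →
      ∫⁻ y, ENNReal.ofReal (‖y‖ ^ m) ∂(P t x) ≤ ENNReal.ofReal (C * (1 + ‖x‖ ^ m')))
    (hP2 : ∀ m : ℝ, 0 < m → ∫⁻ y, ENNReal.ofReal (‖y‖ ^ m) ∂μ < ⊤)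
    (hP3 : ∀ k m : ℝ, 0 < k → 2 * k + 2 < m → ∃ C : ℝ, ∀ t x, 0 ≤ t →
      tvNorm (P t x) μ ≤ C * (1 + ‖x‖ ^ m) * (1 + t) ^ (-(k + 1)))
    (β Cf : ℝ) (hβ : 0 ≤ β) (hCf : 1 ≤ Cf)
    (f : EuclideanSpace ℝ (Fin d) → ℝ) (hf : Measurable f)
    (hfb : ∀ y, |f y| ≤ Cf * (1 + ‖y‖ ^ β))
    (hfμ : ∫ y, f y ∂μ = 0) :
    ∀ m : ℝ, β + 4 < m →
      ∀ ε : ℝ, 0 < ε → ∃ N₀ : ℝ, ∀ N : ℝ, N₀ ≤ N →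
        ∀ x,
          (1 + ‖x‖ ^ m)⁻¹ *
            |(∫ t in Ioi (0 : ℝ), ∫ y, f y ∂(P t x)) -
              ∫ t in Ioc (0 : ℝ) N, ∫ y, f y ∂(P t x)| ≤ ε :=
  stmt2_general d P μ hP hμ hmeas hP1 hP2 hP3 β Cf hβ f hf hfb hfμ
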